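/- Let ν be a Borel probability measure on (0,∞), γ > 0, y > 0, a ∈ ℝ, b > 0, and D(t) = 1 + 2at + (a² + b²)t². If y = γ·∫ t/D(t) dν(t) and 1/(a² + b²) = γ·∫ t²/D(t) dν(t), then y² ≤ (γ − 1 − 2ay)/(a² + b²), and consequently (ay + 1)² + (by)² ≤ γ, i.e. (a + 1/y)² + b² ≤ γ/y². -/

import Mathlib

/-!
Write `D(t) = |1 + t(a + bi)|²` and `I₀ = ∫ 1/D`, `I₁ = ∫ t/D`, `I₂ = ∫ t²/D`. Since
`b ≠ 0`, `D(t)` is comparable to `1 + t²`, so the three integrals are finite; integrating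
`D/D = 1` gives `I₀ + 2a I₁ + (a² + b²) I₂ = 1`, and Cauchy–Schwarz gives `I₁² ≤ I₀ I₂`.
With `γ I₁ = y` and `γ I₂ = 1/(a² + b²)` the latter reads
`y² ≤ γ I₀ / (a² + b²) = (γ - 1 - 2ay)/(a² + b²)`; completing the square gives the disk.
-/

open MeasureTheory

theorem sq_integral_le_integral_mul_integral {α : Type*} [MeasurableSpace α] {μ : Measure α}
    {p q r : α → ℝ} (hp : Integrable p μ) (hq : Integrable q μ) (hr : Integrable r μ)
    (hp0 : 0 ≤ p) (hr0 : 0 ≤ r) (hpqr : ∀ x, q x ^ 2 ≤ p x * r x) :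
    (∫ x, q x ∂μ) ^ 2 ≤ (∫ x, p x ∂μ) * ∫ x, r x ∂μ := by
  have hquad (l : ℝ) :
      0 ≤ (∫ x, r x ∂μ) * (l * l) + 2 * (∫ x, q x ∂μ) * l + ∫ x, p x ∂μ := by
    have hpt (x : α) : 0 ≤ r x * (l * l) + 2 * q x * l + p x := by
      rcases (show 0 ≤ r x from hr0 x).eq_or_lt with hrx | hrx
      · have hq2 := hpqr x
        rw [← hrx, mul_zero] at hq2
        have hqx : q x = 0 := pow_eq_zero_iff two_ne_zero |>.1 (le_antisymm hq2 (sq_nonneg _))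
        simpa [← hrx, hqx] using hp0 x
      · refine (mul_nonneg_iff_of_pos_left hrx).1 ?_
        nlinarith [sq_nonneg (r x * l + q x), hpqr x]
    have hrq : Integrable (fun x ↦ r x * (l * l) + 2 * q x * l) μ :=
      (hr.mul_const _).add ((hq.const_mul 2).mul_const l)
    calc 0 ≤ ∫ x, (r x * (l * l) + 2 * q x * l + p x) ∂μ := integral_nonneg hpt
      _ = _ := by
        rw [integral_add hrq hp, integral_add (hr.mul_const _) ((hq.const_mul 2).mul_const l),
          integral_mul_const, integral_mul_const, integral_const_mul]
  have := discrim_le_zero hquad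
  rw [discrim] at this
  nlinarith

/-- `D(t) = |1 + t(a + bi)|²`. -/
def silversteinDenom (a b t : ℝ) : ℝ := 1 + 2 * a * t + (a ^ 2 + b ^ 2) * t ^ 2

section silversteinDenom

variable {a b : ℝ}

/-- The difference of the two sides is `(1 + at)² + (a + (a² + b²)t)²`. -/
theorem mul_one_add_sq_le_silversteinDenom (a b t : ℝ) :
    b ^ 2 * (1 + t ^ 2) ≤ (1 + a ^ 2 + b ^ 2) * silversteinDenom a b t := by
  unfold silversteinDenom
  nlinarith [sq_nonneg (1 + a * t), sq_nonneg (a + (a ^ 2 + b ^ 2) * t)]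

theorem silversteinDenom_pos (a : ℝ) (hb : b ≠ 0) (t : ℝ) : 0 < silversteinDenom a b t := by
  have hlow : 0 < b ^ 2 * (1 + t ^ 2) := by positivity
  have := mul_one_add_sq_le_silversteinDenom a b t
  exact pos_of_mul_pos_right (hlow.trans_le this) (by positivity)

theorem integrable_div_silversteinDenom {ν : Measure ℝ} [IsFiniteMeasure ν] (a : ℝ)
    (hb : b ≠ 0) {f : ℝ → ℝ} (hf : Continuous f) (hf_le : ∀ t, |f t| ≤ 1 + t ^ 2) :
    Integrable (fun t ↦ f t / silversteinDenom a b t) ν := by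
  have hD := silversteinDenom_pos a hb
  have hcont : Continuous (silversteinDenom a b) := by unfold silversteinDenom; fun_prop
  refine .of_bound (hf.div hcont fun t ↦ (hD t).ne').aestronglyMeasurable
    ((1 + a ^ 2 + b ^ 2) / b ^ 2) (.of_forall fun t ↦ ?_)
  rw [Real.norm_eq_abs, abs_div, abs_of_pos (hD t), div_le_div_iff₀ (hD t) (by positivity)]
  calc |f t| * b ^ 2 ≤ b ^ 2 * (1 + t ^ 2) := by nlinarith [hf_le t, sq_nonneg b]
    _ ≤ (1 + a ^ 2 + b ^ 2) * silversteinDenom a b t :=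
      mul_one_add_sq_le_silversteinDenom a b t

variable {ν : Measure ℝ}

theorem integrable_one_div_silversteinDenom [IsFiniteMeasure ν] (a : ℝ) (hb : b ≠ 0) :
    Integrable (fun t ↦ 1 / silversteinDenom a b t) ν :=
  integrable_div_silversteinDenom a hb continuous_const fun t ↦ by
    rw [abs_one]; nlinarith [sq_nonneg t]

theorem integrable_id_div_silversteinDenom [IsFiniteMeasure ν] (a : ℝ) (hb : b ≠ 0) :
    Integrable (fun t ↦ t / silversteinDenom a b t) ν :=
  integrable_div_silversteinDenom a hb continuous_id fun t ↦ by
    nlinarith [sq_nonneg (|t| - 1), sq_abs t, abs_nonneg t]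

theorem integrable_sq_div_silversteinDenom [IsFiniteMeasure ν] (a : ℝ) (hb : b ≠ 0) :
    Integrable (fun t ↦ t ^ 2 / silversteinDenom a b t) ν :=
  integrable_div_silversteinDenom a hb (continuous_pow 2) fun t ↦ by
    rw [abs_of_nonneg (sq_nonneg t)]; linarith

theorem sq_integral_div_silversteinDenom_le [IsFiniteMeasure ν] (a : ℝ) (hb : b ≠ 0) :
    (∫ t, t / silversteinDenom a b t ∂ν) ^ 2 ≤
      (∫ t, 1 / silversteinDenom a b t ∂ν) * ∫ t, t ^ 2 / silversteinDenom a b t ∂ν := by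
  have hD := silversteinDenom_pos a hb
  refine sq_integral_le_integral_mul_integral (integrable_one_div_silversteinDenom a hb)
    (integrable_id_div_silversteinDenom a hb) (integrable_sq_div_silversteinDenom a hb)
    (fun t ↦ (one_div_pos.2 (hD t)).le) (fun t ↦ div_nonneg (sq_nonneg t) (hD t).le)
    fun t ↦ le_of_eq ?_
  field_simp

theorem integral_one_div_silversteinDenom [IsProbabilityMeasure ν] (a : ℝ) (hb : b ≠ 0) :
    ∫ t, 1 / silversteinDenom a b t ∂ν =
      1 - 2 * a * ∫ t, t / silversteinDenom a b t ∂ν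
        - (a ^ 2 + b ^ 2) * ∫ t, t ^ 2 / silversteinDenom a b t ∂ν := by
  have hpt (t : ℝ) : 1 / silversteinDenom a b t = 1 - 2 * a * (t / silversteinDenom a b t)
      - (a ^ 2 + b ^ 2) * (t ^ 2 / silversteinDenom a b t) := by
    have := (silversteinDenom_pos a hb t).ne'
    field_simp
    unfold silversteinDenom
    ring
  have h1 := (integrable_id_div_silversteinDenom (ν := ν) a hb).const_mul (2 * a)
  have h2 := (integrable_sq_div_silversteinDenom (ν := ν) a hb).const_mul (a ^ 2 + b ^ 2)
  have h01 : Integrable (fun t ↦ 1 - 2 * a * (t / silversteinDenom a b t)) ν :=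
    (integrable_const 1).sub h1
  simp_rw [hpt]
  rw [integral_sub h01 h2, integral_sub (integrable_const 1) h1,
    integral_const_mul, integral_const_mul, integral_const, probReal_univ, one_smul]

end silversteinDenom

theorem silverstein_feasible_disk_general
    (ν : Measure ℝ) [IsProbabilityMeasure ν]
    (γ y a b : ℝ) (hy : 0 < y) (hb : 0 < b)
    (h1 : y = γ * ∫ t, t / (1 + 2 * a * t + (a ^ 2 + b ^ 2) * t ^ 2) ∂ν)
    (h2 : 1 / (a ^ 2 + b ^ 2)
        = γ * ∫ t, t ^ 2 / (1 + 2 * a * t + (a ^ 2 + b ^ 2) * t ^ 2) ∂ν) :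
    y ^ 2 ≤ (γ - 1 - 2 * a * y) / (a ^ 2 + b ^ 2) ∧
    (a * y + 1) ^ 2 + (b * y) ^ 2 ≤ γ ∧
    (a + 1 / y) ^ 2 + b ^ 2 ≤ γ / y ^ 2 := by
  have hA : 0 < a ^ 2 + b ^ 2 := by positivity
  have hI₀ := integral_one_div_silversteinDenom (ν := ν) a hb.ne'
  have hCS := sq_integral_div_silversteinDenom_le (ν := ν) a hb.ne'
  set I₀ := ∫ t, 1 / silversteinDenom a b t ∂ν
  set I₁ := ∫ t, t / silversteinDenom a b t ∂ν
  set I₂ := ∫ t, t ^ 2 / silversteinDenom a b t ∂ν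
  have hy₁ : y = γ * I₁ := h1
  have hI₂ : (a ^ 2 + b ^ 2) * (γ * I₂) = 1 := by
    rw [show γ * I₂ = _ from h2.symm, mul_one_div_cancel hA.ne']
  have hmain : y ^ 2 * (a ^ 2 + b ^ 2) ≤ γ - 1 - 2 * a * y := calc
    y ^ 2 * (a ^ 2 + b ^ 2) = γ ^ 2 * I₁ ^ 2 * (a ^ 2 + b ^ 2) := by rw [hy₁]; ring
    _ ≤ γ ^ 2 * (I₀ * I₂) * (a ^ 2 + b ^ 2) := by gcongr
    _ = γ * I₀ * ((a ^ 2 + b ^ 2) * (γ * I₂)) := by ring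
    _ = γ - 1 - 2 * a * y := by
      linear_combination γ * I₀ * hI₂ + γ * hI₀ - hI₂ + 2 * a * hy₁
  have hdisk : (a * y + 1) ^ 2 + (b * y) ^ 2 ≤ γ := by linear_combination hmain
  refine ⟨(le_div_iff₀ hA).2 hmain, hdisk, ?_⟩
  calc (a + 1 / y) ^ 2 + b ^ 2 = ((a * y + 1) ^ 2 + (b * y) ^ 2) / y ^ 2 := by field_simp
    _ ≤ γ / y ^ 2 := by gcongr

/-- second feasible-set bound for the Silverstein system (via
Cauchy–Schwarz).  If `ν` is a Borel probability measure on `(0,∞)`, `γ > 0`, `y > 0`,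
`b > 0`, `D(t) = 1 + 2at + (a² + b²)t²`, and `y = γ ∫ t/D dν`,
`1/(a² + b²) = γ ∫ t²/D dν`, then `y² ≤ (γ - 1 - 2ay)/(a² + b²)`, hence
`(ay + 1)² + (by)² ≤ γ`, i.e. `(a + 1/y)² + b² ≤ γ/y²`. -/
theorem silverstein_feasible_disk
    (ν : Measure ℝ) [IsProbabilityMeasure ν] (hν : ν (Set.Ioi 0)ᶜ = 0)
    (γ y a b : ℝ) (hγ : 0 < γ) (hy : 0 < y) (hb : 0 < b)
    (h1 : y = γ * ∫ t, t / (1 + 2 * a * t + (a ^ 2 + b ^ 2) * t ^ 2) ∂ν)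
    (h2 : 1 / (a ^ 2 + b ^ 2)
        = γ * ∫ t, t ^ 2 / (1 + 2 * a * t + (a ^ 2 + b ^ 2) * t ^ 2) ∂ν) :
    y ^ 2 ≤ (γ - 1 - 2 * a * y) / (a ^ 2 + b ^ 2) ∧
    (a * y + 1) ^ 2 + (b * y) ^ 2 ≤ γ ∧
    (a + 1 / y) ^ 2 + b ^ 2 ≤ γ / y ^ 2 :=
  silverstein_feasible_disk_general ν γ y a b hy hb h1 h2
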